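/- arXiv:2305.16884 — 4 statements merged into one kernel-verified Lean document; each statement's English description precedes it below -/
import Mathlib

section
/- Let a ≥ 1/2 and let f : [-1,1]² → ℂ be a bounded Borel function that is continuous at (0,0) with f(0,0) = 0. Then ∫_{-1}^{u} f(v,s)/(v² + s²)^a dv = o(⟨|s|⟩^{1-2a}) as s → 0, uniformly in u ∈ [-1,1], where ⟨t⟩^b := (t^b - 1)/(-b) + 1 if b < 0, ⟨t⟩^0 := 1 - log t, and ⟨t⟩^b := 1 if b > 0, for t ∈ (0,1]. -/
/-!
Split the integrand at a small radius `ρ` around the origin. Where `|v| < ρ`, continuity of `f`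
at `(0,0)` with `f (0,0) = 0` makes `|f (v,s)| ≤ η`, and the kernel satisfies
`∫_{-1}^1 (v² + s²)^{-a} dv ≤ (4a + 2) ⟨|s|⟩^{1-2a}`: compare it with `|s|^{-2a}` for `|v| ≤ |s|`
and with `|v|^{-2a}` beyond. Where `|v| ≥ ρ` the integrand is bounded by the constant `M ρ^{-2a}`,
which is negligible because `⟨t⟩^{1-2a} → ∞` as `t → 0⁺` when `a ≥ 1/2`.
-/

open Real Filter Topology MeasureTheory Set intervalIntegral

/-- The weight function `⟨t⟩^b` from the paper. -/
noncomputable def angBra (t b : ℝ) : ℝ :=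
  if b < 0 then (t ^ b - 1) / (-b) + 1 else if b = 0 then 1 - Real.log t else 1

lemma one_le_angBra {t b : ℝ} (ht0 : 0 < t) (ht1 : t ≤ 1) (hb : b ≤ 0) :
    1 ≤ angBra t b := by
  rcases hb.lt_or_eq with hb | rfl
  · have : 0 ≤ (t ^ b - 1) / (-b) :=
      div_nonneg (by linarith [one_le_rpow_of_pos_of_le_one_of_nonpos ht0 ht1 hb.le]) (by linarith)
    simp only [angBra, if_pos hb]
    linarith
  · simp [angBra, log_nonpos ht0.le ht1]

lemma tendsto_angBra_nhdsGT_zero {b : ℝ} (hb : b ≤ 0) :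
    Tendsto (angBra · b) (𝓝[>] 0) atTop := by
  rcases hb.lt_or_eq with hb | rfl
  · simp only [angBra, if_pos hb]
    exact tendsto_atTop_add_const_right _ 1 <|
      (tendsto_atTop_add_const_right _ (-1) (tendsto_rpow_neg_nhdsGT_zero hb)).atTop_div_const
        (by linarith)
  · simp only [angBra, lt_irrefl, if_false, if_true, sub_eq_add_neg]
    exact tendsto_atTop_add_const_left _ 1 (tendsto_neg_atTop_iff.mpr tendsto_log_nhdsGT_zero)

lemma integral_rpow_sub_one_eq_angBra_sub_one {t b : ℝ} (ht0 : 0 < t) (hb : b ≤ 0) :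
    ∫ v in t..1, v ^ (b - 1) = angBra t b - 1 := by
  rcases hb.lt_or_eq with hb | rfl
  · rw [integral_rpow (.inr ⟨by intro h; linarith, notMem_uIcc_of_lt ht0 one_pos⟩),
      sub_add_cancel, one_rpow]
    simp only [angBra, if_pos hb]
    field_simp
    ring
  · simp_rw [zero_sub, rpow_neg_one]
    rw [integral_inv_of_pos ht0 one_pos]
    simp [angBra]

lemma rpow_le_one_sub_mul_angBra {t b : ℝ} (ht0 : 0 < t) (ht1 : t ≤ 1) (hb : b ≤ 0) :
    t ^ b ≤ (1 - b) * angBra t b := by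
  have hA := one_le_angBra ht0 ht1 hb
  rcases hb.lt_or_eq with hb | rfl
  · have key : -b * (angBra t b - 1) = t ^ b - 1 := by
      simp only [angBra, if_pos hb, add_sub_cancel_right]
      exact mul_div_cancel₀ _ (neg_ne_zero.2 hb.ne)
    linarith
  · simpa using hA

lemma inv_rpow_le_of_sq_le {x w a : ℝ} (hw : 0 < w) (hwx : w ^ 2 ≤ x) (ha : 0 ≤ a) :
    (x ^ a)⁻¹ ≤ w ^ (-(2 * a)) := by
  rw [rpow_neg hw.le, rpow_mul hw.le, rpow_two]
  exact inv_anti₀ (by positivity) (rpow_le_rpow (by positivity) hwx ha)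

lemma continuous_inv_rpow_sq_add_sq (a : ℝ) {t : ℝ} (ht : t ≠ 0) :
    Continuous fun v : ℝ => ((v ^ 2 + t ^ 2) ^ a)⁻¹ := by
  have hpos : ∀ v : ℝ, 0 < v ^ 2 + t ^ 2 := fun v => by positivity
  exact ((continuous_pow 2).add continuous_const |>.rpow_const fun v => .inl (hpos v).ne').inv₀
    fun v => (rpow_pos_of_pos (hpos v) a).ne'

lemma integral_inv_rpow_sq_add_sq_le {a t : ℝ} (ha : 1 / 2 ≤ a) (ht0 : 0 < t) (ht1 : t ≤ 1) :
    ∫ v in (-1 : ℝ)..1, ((v ^ 2 + t ^ 2) ^ a)⁻¹ ≤ (4 * a + 2) * angBra t (1 - 2 * a) := by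
  set k : ℝ → ℝ := fun v => ((v ^ 2 + t ^ 2) ^ a)⁻¹
  have hk : ∀ c d, IntervalIntegrable k volume c d := fun c d =>
    (continuous_inv_rpow_sq_add_sq a ht0.ne').intervalIntegrable c d
  have h_even : ∫ v in (-1 : ℝ)..0, k v = ∫ v in (0 : ℝ)..1, k v := by
    rw [← neg_zero, ← integral_comp_neg]
    simp [k]
  have h_inner : ∫ v in (0 : ℝ)..t, k v ≤ t ^ (1 - 2 * a) := calc
    _ ≤ ∫ _ in (0 : ℝ)..t, t ^ (-(2 * a)) :=
        integral_mono_on ht0.le (hk _ _) intervalIntegrable_const fun v _ =>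
          inv_rpow_le_of_sq_le ht0 (by nlinarith) (by linarith)
    _ = t ^ (1 - 2 * a) := by
        rw [intervalIntegral.integral_const, sub_zero, smul_eq_mul, sub_eq_add_neg,
          rpow_add ht0, rpow_one]
  have h_outer : ∫ v in t..1, k v ≤ angBra t (1 - 2 * a) - 1 := by
    rw [← integral_rpow_sub_one_eq_angBra_sub_one ht0 (by linarith),
      show 1 - 2 * a - 1 = -(2 * a) by ring]
    exact integral_mono_on ht1 (hk _ _)
      (intervalIntegrable_rpow (.inr (notMem_uIcc_of_lt ht0 one_pos))) fun v hv =>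
        inv_rpow_le_of_sq_le (ht0.trans_le hv.1) (by nlinarith) (by linarith)
  have h_pow := rpow_le_one_sub_mul_angBra ht0 ht1 (b := 1 - 2 * a) (by linarith)
  calc ∫ v in (-1 : ℝ)..1, k v = 2 * ((∫ v in (0 : ℝ)..t, k v) + ∫ v in t..1, k v) := by
        rw [← integral_add_adjacent_intervals (hk (-1) 0) (hk 0 1), h_even,
          ← integral_add_adjacent_intervals (hk 0 t) (hk t 1)]
        ring
    _ ≤ (4 * a + 2) * angBra t (1 - 2 * a) := by linarith

lemma norm_div_rpow_le_of_near_far {f : ℝ × ℝ → ℂ} {K : Set (ℝ × ℝ)} {a M η ρ v s : ℝ}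
    (ha : 0 ≤ a) (hη : 0 ≤ η) (hρ : 0 < ρ) (hM : ∀ p ∈ K, ‖f p‖ ≤ M)
    (hnear : ∀ p ∈ K, dist p 0 < ρ → ‖f p‖ ≤ η) (hs : |s| < ρ) (hvs : (v, s) ∈ K) :
    ‖f (v, s) / (((v ^ 2 + s ^ 2) ^ a : ℝ) : ℂ)‖ ≤
      η * ((v ^ 2 + s ^ 2) ^ a)⁻¹ + M * ρ ^ (-(2 * a)) := by
  have hk : 0 ≤ ((v ^ 2 + s ^ 2) ^ a)⁻¹ := by positivity
  have hM0 : 0 ≤ M := (norm_nonneg _).trans (hM _ hvs)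
  rw [norm_div, Complex.norm_real, norm_of_nonneg (by positivity), div_eq_mul_inv]
  rcases lt_or_ge |v| ρ with hv | hv
  · have hdist : dist (v, s) 0 < ρ := by
      rw [Prod.dist_eq, Prod.fst_zero, Prod.snd_zero, Real.dist_0_eq_abs, Real.dist_0_eq_abs]
      exact max_lt hv hs
    have := mul_le_mul_of_nonneg_right (hnear _ hvs hdist) hk
    have : 0 ≤ M * ρ ^ (-(2 * a)) := by positivity
    linarith
  · have hfar : ((v ^ 2 + s ^ 2) ^ a)⁻¹ ≤ ρ ^ (-(2 * a)) :=
      inv_rpow_le_of_sq_le hρ (by nlinarith [sq_abs v, pow_le_pow_left₀ hρ.le hv 2]) ha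
    have := mul_le_mul (hM _ hvs) hfar hk hM0
    have := mul_nonneg hη hk
    linarith

lemma norm_integral_le_of_norm_le_kernel {E : Type*} [NormedAddCommGroup E] [NormedSpace ℝ E]
    {F : ℝ → E} {a s η C u : ℝ} (ha : 1 / 2 ≤ a) (hη : 0 ≤ η) (hC : 0 ≤ C) (hs0 : 0 < |s|)
    (hs1 : |s| ≤ 1) (hu : u ∈ Icc (-1 : ℝ) 1)
    (hF : ∀ v ∈ Icc (-1 : ℝ) 1, ‖F v‖ ≤ η * ((v ^ 2 + s ^ 2) ^ a)⁻¹ + C) :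
    ‖∫ v in (-1 : ℝ)..u, F v‖ ≤ η * ((4 * a + 2) * angBra |s| (1 - 2 * a)) + 2 * C := by
  set k : ℝ → ℝ := fun v => ((v ^ 2 + s ^ 2) ^ a)⁻¹
  have hk : ∀ c d, IntervalIntegrable k volume c d :=
    (continuous_inv_rpow_sq_add_sq a (abs_pos.1 hs0)).intervalIntegrable
  have hg : ∀ c d, IntervalIntegrable (fun v => η * k v + C) volume c d :=
    fun c d => ((hk c d).const_mul η).add intervalIntegrable_const
  have hkernel := integral_inv_rpow_sq_add_sq_le ha hs0 hs1
  simp only [sq_abs] at hkernel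
  calc _ ≤ ∫ v in (-1 : ℝ)..u, (η * k v + C) :=
        intervalIntegral.norm_integral_le_of_norm_le hu.1
          (ae_of_all _ fun v hv => hF v ⟨hv.1.le, hv.2.trans hu.2⟩) (hg _ _)
    _ ≤ ∫ v in (-1 : ℝ)..1, (η * k v + C) :=
        integral_mono_interval le_rfl hu.1 hu.2 (ae_of_all _ fun v => by positivity) (hg _ _)
    _ = η * (∫ v in (-1 : ℝ)..1, k v) + 2 * C := by
        rw [integral_add ((hk _ _).const_mul η) intervalIntegrable_const,
          intervalIntegral.integral_const_mul, intervalIntegral.integral_const]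
        norm_num
    _ ≤ η * ((4 * a + 2) * angBra |s| (1 - 2 * a)) + 2 * C := by gcongr

theorem stmt3_general (a : ℝ) (ha : 1/2 ≤ a) (f : ℝ × ℝ → ℂ)
    (hbd : ∃ M : ℝ, ∀ p ∈ Set.Icc ((-1:ℝ), (-1:ℝ)) ((1:ℝ), (1:ℝ)), ‖f p‖ ≤ M)
    (hcont : ContinuousWithinAt f (Set.Icc ((-1:ℝ), (-1:ℝ)) ((1:ℝ), (1:ℝ))) (0, 0))
    (h0 : f (0, 0) = 0) :
    ∀ ε > 0, ∃ δ > 0, ∀ s : ℝ, 0 < |s| → |s| < δ → ∀ u ∈ Set.Icc (-1:ℝ) 1,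
      ‖∫ v in (-1:ℝ)..u, f (v, s) / ((((v^2 + s^2) ^ a : ℝ)) : ℂ)‖ ≤
        ε * angBra |s| (1 - 2*a) := by
  intro ε hε
  obtain ⟨M, hM⟩ := hbd
  have hM0 : 0 ≤ M :=
    (norm_nonneg _).trans (hM (0, 0) ⟨⟨by norm_num, by norm_num⟩, by norm_num, by norm_num⟩)
  obtain ⟨η, hη0, hη⟩ : ∃ η > 0, η * (4 * a + 2) = ε / 2 :=
    ⟨ε / (2 * (4 * a + 2)), div_pos hε (by linarith), by field_simp⟩
  obtain ⟨r, hr, hnear⟩ := Metric.continuousWithinAt_iff.1 hcont η hη0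
  set ρ := min r 1
  set C := M * ρ ^ (-(2 * a))
  obtain ⟨δ, hδ, hlarge⟩ := Metric.mem_nhdsWithin_iff.1 <|
    (tendsto_angBra_nhdsGT_zero (b := 1 - 2 * a) (by linarith)).eventually_ge_atTop (4 * C / ε)
  refine ⟨min δ ρ, lt_min hδ (lt_min hr one_pos), fun s hs hsδρ u hu => ?_⟩
  have hsρ : |s| < ρ := hsδρ.trans_le (min_le_right _ _)
  have hs1 : |s| ≤ 1 := hsρ.le.trans (min_le_right _ _)
  have hCA : 4 * C ≤ angBra |s| (1 - 2 * a) * ε := (div_le_iff₀ hε).1 <|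
    hlarge ⟨by simpa using hsδρ.trans_le (min_le_left _ _), hs⟩
  have hF : ∀ v ∈ Icc (-1 : ℝ) 1, ‖f (v, s) / (((v ^ 2 + s ^ 2) ^ a : ℝ) : ℂ)‖ ≤
      η * ((v ^ 2 + s ^ 2) ^ a)⁻¹ + C := fun v hv =>
    norm_div_rpow_le_of_near_far (by linarith) hη0.le (lt_min hr one_pos) hM
      (fun p hp hpρ => by simpa [h0] using (hnear hp (hpρ.trans_le (min_le_left _ _))).le) hsρ
      ⟨⟨hv.1, (abs_le.1 hs1).1⟩, hv.2, (abs_le.1 hs1).2⟩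
  calc _ ≤ η * ((4 * a + 2) * angBra |s| (1 - 2 * a)) + 2 * C :=
        norm_integral_le_of_norm_le_kernel ha hη0.le (by positivity) hs hs1 hu hF
    _ ≤ ε * angBra |s| (1 - 2 * a) := by rw [← mul_assoc, hη]; linarith

theorem stmt3 (a : ℝ) (ha : 1/2 ≤ a) (f : ℝ × ℝ → ℂ)
    (hmeas : Measurable f)
    (hbd : ∃ M : ℝ, ∀ p ∈ Set.Icc ((-1:ℝ), (-1:ℝ)) ((1:ℝ), (1:ℝ)), ‖f p‖ ≤ M)
    (hcont : ContinuousWithinAt f (Set.Icc ((-1:ℝ), (-1:ℝ)) ((1:ℝ), (1:ℝ))) (0, 0))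
    (h0 : f (0, 0) = 0) :
    ∀ ε > 0, ∃ δ > 0, ∀ s : ℝ, 0 < |s| → |s| < δ → ∀ u ∈ Set.Icc (-1:ℝ) 1,
      ‖∫ v in (-1:ℝ)..u, f (v, s) / ((((v^2 + s^2) ^ a : ℝ)) : ℂ)‖ ≤
        ε * angBra |s| (1 - 2*a) :=
  stmt3_general a ha f hbd hcont h0
end

section
/- For any integer m ≥ 1, any real c, and any 0 < s ≤ 1, one has ⟨s^m⟩^c ≤ m ⟨s⟩^{cm}, where ⟨t⟩^b := (t^b − 1)/(−b) + 1 if b < 0, ⟨t⟩^0 := 1 − log t, and ⟨t⟩^b := 1 if b > 0. -/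
theorem stmt7 (m : ℕ) (hm : 1 ≤ m) (c : ℝ) (s : ℝ) (hs0 : 0 < s) (hs1 : s ≤ 1) :
    angBra (s ^ m) c ≤ (m : ℝ) * angBra s (c * m) := by
  have hm1 : (1:ℝ) ≤ m := by exact_mod_cast hm
  have hmpos : (0:ℝ) < m := by linarith
  unfold angBra
  rcases lt_trichotomy c 0 with hc | hc | hc
  · have hcm : c * m < 0 := mul_neg_of_neg_of_pos hc hmpos
    rw [if_pos hc, if_pos hcm]
    have hpow : (s ^ m : ℝ) ^ c = s ^ (c * m) := by
      rw [← Real.rpow_natCast s m, ← Real.rpow_mul hs0.le]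
      ring_nf
    rw [hpow]
    have hkey : (m:ℝ) * ((s ^ (c * m) - 1) / (-(c * m))) = (s ^ (c * m) - 1) / (-c) := by
      have hm0 : (m:ℝ) ≠ 0 := hmpos.ne'
      rw [mul_div_assoc', show -(c*(m:ℝ)) = -c * (m:ℝ) by ring, mul_comm (m:ℝ) (s ^ (c * ↑m) - 1),
        mul_div_mul_right _ _ hm0]
    have : (m:ℝ) * ((s ^ (c * m) - 1) / (-(c * m)) + 1)
        = (s ^ (c * m) - 1) / (-c) + m := by
      rw [mul_add, hkey, mul_one]
    rw [this]
    linarith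
  · subst hc
    norm_num [Real.log_pow]
    have hlog : Real.log s ≤ 0 := Real.log_nonpos hs0.le hs1
    nlinarith
  · have hcm : 0 < c * m := mul_pos hc hmpos
    rw [if_neg (not_lt.2 hc.le), if_neg hc.ne', if_neg (not_lt.2 hcm.le), if_neg hcm.ne']
    linarith
end

section
/- For any real a > 1/2 and r > 0 there exists a constant C > 0 such that for all (u,s) ∈ [-1,1]² with (u,s) ≠ (0,0) and u ≤ r|s|, one has ∫_{-1}^{u} (v² + s²)^{-a} dv ≤ C ((u² + s²)/2)^{1/2 - a}. -/
set_option maxHeartbeats 1000000 in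
theorem stmt8 (a r : ℝ) (ha : 1/2 < a) (hr : 0 < r) :
    ∃ C > 0, ∀ u s : ℝ, u ∈ Set.Icc (-1:ℝ) 1 → s ∈ Set.Icc (-1:ℝ) 1 →
      (u, s) ≠ ((0:ℝ), (0:ℝ)) → u ≤ r * |s| →
      (∫ v in (-1:ℝ)..u, (v^2 + s^2) ^ (-a)) ≤ C * ((u^2 + s^2)/2) ^ ((1:ℝ)/2 - a) := by
  have h2a : 0 < 2*a - 1 := by linarith
  refine ⟨1/(2*a-1) + (1+r)*(1+r^2)^a,
    add_pos (div_pos one_pos h2a) (by positivity), ?_⟩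
  intro u s hu hs hne hur
  obtain ⟨hu1, hu2⟩ := hu
  obtain ⟨hs1, hs2⟩ := hs
  have hx : 0 < u^2 + s^2 := by
    rcases eq_or_ne u 0 with h | h
    · have hs0 : s ≠ 0 := fun h' => hne (by simp [h, h'])
      have : 0 < s^2 := lt_of_le_of_ne (sq_nonneg s) (Ne.symm (pow_ne_zero 2 hs0))
      nlinarith [sq_nonneg u]
    · have : 0 < u^2 := lt_of_le_of_ne (sq_nonneg u) (Ne.symm (pow_ne_zero 2 h))
      nlinarith [sq_nonneg s]
  set x := u^2 + s^2 with hxdef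
  set d := Real.sqrt x with hddef
  have hd : 0 < d := Real.sqrt_pos.2 hx
  have hud : -d ≤ u := by
    have h1 : -u ≤ d := by
      calc -u ≤ |u| := neg_le_abs u
        _ = Real.sqrt (u^2) := (Real.sqrt_sq_eq_abs u).symm
        _ ≤ d := Real.sqrt_le_sqrt (by nlinarith [sq_nonneg s])
    linarith
  set m := min d 1 with hmdef
  have hm0 : 0 < m := lt_min hd one_pos
  have hm1 : m ≤ 1 := min_le_right _ _
  have hmd : m ≤ d := min_le_left _ _
  have hmu : -m ≤ u := by
    have h1 : -u ≤ m := le_min (by linarith) (by linarith)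
    linarith
  -- positivity of the base on the interval
  have hbase : ∀ v ∈ Set.Icc (-1:ℝ) u, 0 < v^2 + s^2 := by
    intro v hv
    rcases eq_or_ne s 0 with h | h
    · have hu0 : u ≠ 0 := fun h' => hne (by simp [h, h'])
      have hulz : u < 0 := lt_of_le_of_ne (by simpa [h] using hur) hu0
      have hvneg : v < 0 := lt_of_le_of_lt hv.2 hulz
      nlinarith [sq_nonneg s]
    · have : 0 < s^2 := lt_of_le_of_ne (sq_nonneg s) (Ne.symm (pow_ne_zero 2 h))
      nlinarith [sq_nonneg v]
  have hcont : ∀ p q : ℝ, Set.Icc p q ⊆ Set.Icc (-1:ℝ) u →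
      ContinuousOn (fun v : ℝ => (v^2 + s^2) ^ (-a)) (Set.Icc p q) := by
    intro p q hsub
    apply ContinuousOn.rpow_const
    · exact (((continuous_pow 2).add continuous_const).continuousOn)
    · intro v hv
      exact Or.inl (hbase v (hsub hv)).ne'
  have hi1 : IntervalIntegrable (fun v : ℝ => (v^2 + s^2) ^ (-a))
      MeasureTheory.volume (-1) (-m) :=
    (hcont (-1) (-m) (Set.Icc_subset_Icc le_rfl hmu)).intervalIntegrable_of_Icc (by linarith)
  have hi2 : IntervalIntegrable (fun v : ℝ => (v^2 + s^2) ^ (-a))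
      MeasureTheory.volume (-m) u :=
    (hcont (-m) u (Set.Icc_subset_Icc (by linarith) le_rfl)).intervalIntegrable_of_Icc hmu
  have hsplit := intervalIntegral.integral_add_adjacent_intervals hi1 hi2
  set M := m ^ (1 - 2*a) with hMdef
  -- Bound on the far piece
  have hb1 : (∫ v in (-1:ℝ)..(-m), (v^2 + s^2) ^ (-a)) ≤ M / (2*a-1) := by
    have hig : IntervalIntegrable (fun v : ℝ => (-v) ^ (-(2*a)))
        MeasureTheory.volume (-1) (-m) := by
      apply ContinuousOn.intervalIntegrable_of_Icc (by linarith)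
      apply ContinuousOn.rpow_const continuous_neg.continuousOn
      intro v hv
      have : v < 0 := lt_of_le_of_lt hv.2 (by linarith)
      exact Or.inl (by linarith)
    have hmono : (∫ v in (-1:ℝ)..(-m), (v^2 + s^2) ^ (-a))
        ≤ ∫ v in (-1:ℝ)..(-m), (-v) ^ (-(2*a)) := by
      apply intervalIntegral.integral_mono_on (by linarith) hi1 hig
      intro v hv
      have hvm : v ≤ -m := hv.2
      have hvneg : 0 < -v := by linarith
      have h1 : (v^2 + s^2) ^ (-a) ≤ (v^2) ^ (-a) :=
        Real.rpow_le_rpow_of_nonpos (by nlinarith) (by nlinarith [sq_nonneg s]) (by linarith)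
      have h2 : (v^2 : ℝ) = (-v) ^ (2:ℝ) := by
        rw [show ((2:ℝ) = ((2:ℕ):ℝ)) by norm_num, Real.rpow_natCast]; ring
      calc (v^2 + s^2) ^ (-a) ≤ (v^2) ^ (-a) := h1
        _ = ((-v) ^ (2:ℝ)) ^ (-a) := by rw [h2]
        _ = (-v) ^ (-(2*a)) := by
            rw [← Real.rpow_mul hvneg.le]
            norm_num
    have hcomp : (∫ v in (-1:ℝ)..(-m), (-v) ^ (-(2*a)))
        = ∫ t in m..(1:ℝ), t ^ (-(2*a)) := by
      have h := intervalIntegral.integral_comp_neg (a := (-1:ℝ)) (b := -m)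
        (fun t : ℝ => t ^ (-(2*a)))
      simpa using h
    have hval : (∫ t in m..(1:ℝ), t ^ (-(2*a))) = (M - 1) / (2*a-1) := by
      rw [integral_rpow (Or.inr ⟨by intro h; linarith,
        Set.notMem_uIcc_of_lt hm0 one_pos⟩)]
      rw [Real.one_rpow, show (-(2*a) + 1 = 1 - 2*a) by ring, ← hMdef]
      rw [div_eq_div_iff (by intro h; linarith : (1:ℝ) - 2*a ≠ 0) (by linarith : (2*a-1:ℝ) ≠ 0)]
      ring
    have hM0 : 0 < M := Real.rpow_pos_of_pos hm0 _
    calc (∫ v in (-1:ℝ)..(-m), (v^2 + s^2) ^ (-a))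
        ≤ ∫ v in (-1:ℝ)..(-m), (-v) ^ (-(2*a)) := hmono
      _ = (M - 1) / (2*a-1) := by rw [hcomp, hval]
      _ ≤ M / (2*a-1) := by gcongr; linarith
  -- Bound on the near piece
  have hb2 : (∫ v in (-m:ℝ)..u, (v^2 + s^2) ^ (-a))
      ≤ (u + m) * ((1+r^2) ^ a * x ^ (-a)) := by
    have hpt : ∀ v ∈ Set.Icc (-m) u, (v^2 + s^2) ^ (-a) ≤ (1+r^2) ^ a * x ^ (-a) := by
      intro v hv
      have hone : (1:ℝ) ≤ (1+r^2) ^ a :=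
        Real.one_le_rpow (by nlinarith) (by linarith)
      rcases le_or_gt u 0 with hu0 | hu0
      · have hvu : v ≤ u := hv.2
        have h1 : x ≤ v^2 + s^2 := by
          have : u^2 ≤ v^2 := by nlinarith
          simp only [hxdef]; linarith
        have h2 : (v^2 + s^2) ^ (-a) ≤ x ^ (-a) :=
          Real.rpow_le_rpow_of_nonpos hx h1 (by linarith)
        calc (v^2 + s^2) ^ (-a) ≤ x ^ (-a) := h2
          _ ≤ (1+r^2) ^ a * x ^ (-a) :=
            le_mul_of_one_le_left (Real.rpow_nonneg hx.le _) hone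
      · have hus : u^2 ≤ r^2 * s^2 := by
          have habs : 0 ≤ r * |s| := le_trans hu0.le hur
          nlinarith [sq_abs s, abs_nonneg s]
        have hs2 : x / (1+r^2) ≤ s^2 := by
          rw [div_le_iff₀ (by positivity)]
          simp only [hxdef]; nlinarith
        have h1 : x / (1+r^2) ≤ v^2 + s^2 := le_trans hs2 (by nlinarith [sq_nonneg v])
        have h2 : (v^2 + s^2) ^ (-a) ≤ (x / (1+r^2)) ^ (-a) :=
          Real.rpow_le_rpow_of_nonpos (by positivity) h1 (by linarith)
        have h3 : (x / (1+r^2)) ^ (-a) = (1+r^2) ^ a * x ^ (-a) := by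
          rw [Real.div_rpow hx.le (by positivity),
            Real.rpow_neg (by positivity : (0:ℝ) ≤ 1+r^2), div_eq_mul_inv, inv_inv,
            mul_comm]
        linarith [h2, h3.symm.le]
    calc (∫ v in (-m:ℝ)..u, (v^2 + s^2) ^ (-a))
        ≤ ∫ _ in (-m:ℝ)..u, (1+r^2) ^ a * x ^ (-a) :=
          intervalIntegral.integral_mono_on hmu hi2 intervalIntegrable_const hpt
      _ = (u - (-m)) • ((1+r^2) ^ a * x ^ (-a)) := intervalIntegral.integral_const _
      _ = (u + m) * ((1+r^2) ^ a * x ^ (-a)) := by rw [smul_eq_mul]; ring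
  -- the target quantity
  set Y := ((x:ℝ)/2) ^ ((1:ℝ)/2 - a) with hYdef
  have hY : 0 < Y := Real.rpow_pos_of_pos (by linarith) _
  have hxY : x ^ ((1:ℝ)/2 - a) ≤ Y :=
    Real.rpow_le_rpow_of_nonpos (by linarith) (by linarith) (by linarith)
  -- (A) : M ≤ Y
  have hA : M ≤ Y := by
    rcases le_total d 1 with hd1 | hd1
    · have hmeq : m = d := min_eq_left hd1
      have hdx : d ^ (1 - 2*a) = x ^ ((1:ℝ)/2 - a) := by
        rw [hddef, Real.sqrt_eq_rpow, ← Real.rpow_mul hx.le]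
        congr 1; ring
      rw [hMdef, hmeq, hdx]
      exact hxY
    · have hmeq : m = 1 := min_eq_right hd1
      rw [hMdef, hmeq, Real.one_rpow]
      apply Real.one_le_rpow_of_pos_of_le_one_of_nonpos (by linarith)
      · simp only [hxdef]; nlinarith
      · linarith
  -- (B) : (u+m) * x^(-a) ≤ (1+r) * Y
  have hdxa : d * x ^ (-a) = x ^ ((1:ℝ)/2 - a) := by
    rw [hddef, Real.sqrt_eq_rpow, ← Real.rpow_add hx, sub_eq_add_neg]
  have hum : u + m ≤ (1+r) * d := by
    rcases le_or_gt u 0 with hu0 | hu0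
    · nlinarith
    · have hsd : |s| ≤ d := by
        rw [hddef, ← Real.sqrt_sq_eq_abs]
        exact Real.sqrt_le_sqrt (by simp only [hxdef]; nlinarith [sq_nonneg u])
      have : u ≤ r * d := le_trans hur (by nlinarith)
      nlinarith
  have hB : (u + m) * x ^ (-a) ≤ (1+r) * Y := by
    have hxa : (0:ℝ) < x ^ (-a) := Real.rpow_pos_of_pos hx _
    have h1 : (u + m) * x ^ (-a) ≤ ((1+r) * d) * x ^ (-a) :=
      mul_le_mul_of_nonneg_right hum hxa.le
    have h2 : ((1+r) * d) * x ^ (-a) = (1+r) * (d * x ^ (-a)) := by ring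
    have h3 : (1+r) * (d * x ^ (-a)) ≤ (1+r) * Y := by
      apply mul_le_mul_of_nonneg_left _ (by linarith)
      rw [hdxa]; exact hxY
    linarith
  -- combine
  have hra : (0:ℝ) < (1+r^2) ^ a := Real.rpow_pos_of_pos (by positivity) _
  have hfin : (∫ v in (-1:ℝ)..u, (v^2 + s^2) ^ (-a))
      ≤ M / (2*a-1) + (u + m) * ((1+r^2) ^ a * x ^ (-a)) := by
    rw [← hsplit]; exact add_le_add hb1 hb2
  have hstep : (u + m) * ((1+r^2) ^ a * x ^ (-a)) ≤ (1+r) * (1+r^2) ^ a * Y := by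
    have := mul_le_mul_of_nonneg_left hB hra.le
    nlinarith [this]
  calc (∫ v in (-1:ℝ)..u, (v^2 + s^2) ^ (-a))
      ≤ M / (2*a-1) + (u + m) * ((1+r^2) ^ a * x ^ (-a)) := hfin
    _ ≤ Y / (2*a-1) + (1+r) * (1+r^2) ^ a * Y := by
        refine add_le_add ?_ hstep
        gcongr
    _ = (1/(2*a-1) + (1+r)*(1+r^2)^a) * Y := by ring
end

section
/- Let m ≥ 2 and let a₁, a₂ be integers. For 0 ≤ l < m let G_l = θ^l G₀ be the l-th branch of the m-th root (θ = e^{2πi/m}, G₀ the principal branch), and define 𝔊^l_{a₁,a₂}(u,s) := ∫_{-1}^{u} G_l(v + is)^{-a₁} conj(G_l(v + is))^{-a₂} dv for (u,s) ∈ [-1,1]² ∖ ([0,1]×{0}). Then a₁ 𝔊^l_{a₁+m,a₂}(1,s) + a₂ 𝔊^l_{a₁,a₂+m}(1,s) = m (G_l(−1+is)^{-a₁} conj(G_l(−1+is))^{-a₂} − G_l(1+is)^{-a₁} conj(G_l(1+is))^{-a₂}) for all s ∈ [-1,1] ∖ {0}; in particular s ↦ a₁𝔊^l_{a₁+m,a₂}(1,s)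 + a₂𝔊^l_{a₁,a₂+m}(1,s) extends real-analytically to (0,1] and to [-1,0). -/
/-- The argument of a complex number, taken in `[0, 2π)`. -/
noncomputable def argTwoPi (z : ℂ) : ℝ := if 0 ≤ z.arg then z.arg else z.arg + 2 * Real.pi

/-- The principal branch `G₀` of the `m`-th root:
`G₀(r e^{it}) = r^{1/m} e^{it/m}` for `t ∈ [0, 2π)`. -/
noncomputable def rootBranch (m : ℕ) (z : ℂ) : ℂ :=
  ((‖z‖ ^ ((1 : ℝ) / m) : ℝ) : ℂ) * Complex.exp (Complex.I * ((argTwoPi z / m : ℝ) : ℂ))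

/-- The `l`-th branch `G_l = θ^l G₀` of the `m`-th root, where `θ = e^{2πi/m}`. -/
noncomputable def Gl (m l : ℕ) (z : ℂ) : ℂ :=
  Complex.exp (2 * (Real.pi : ℂ) * Complex.I / m) ^ l * rootBranch m z

/-- The function `𝔊^l_{a₁,a₂}(u,s) = ∫_{-1}^u G_l(v+is)^{-a₁} conj(G_l(v+is))^{-a₂} dv`. -/
noncomputable def frakG (m l : ℕ) (a₁ a₂ : ℤ) (u s : ℝ) : ℂ :=
  ∫ v in (-1:ℝ)..u,
    Gl m l ((v : ℂ) + Complex.I * (s : ℂ)) ^ (-a₁) *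
      (starRingEnd ℂ) (Gl m l ((v : ℂ) + Complex.I * (s : ℂ))) ^ (-a₂)

/-! On a horizontal line `Im z = s ≠ 0` the branch `G_l` is holomorphic with `G_l ^ m = z`,
so `G_l' = G_l / (m z)` and the logarithmic derivative of `v ↦ G_l^{-a₁} conj(G_l)^{-a₂}` along
the line is `-(a₁ / z + a₂ / conj z) / m`. Raising `a₁` (resp. `a₂`) by `m` divides the integrand
by `z` (resp. `conj z`), so the left-hand side integrates an exact derivative. At the endpoints,
`G_l(-1 + is)` is a fixed multiple of `(1 - is)^{1/m}` for all `s ≠ 0`, and `G_l(1 + is)` a fixed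
multiple of `(1 + is)^{1/m}` on each of `s > 0` and `s < 0`; these are analytic across `s = 0`. -/

open Complex ComplexConjugate MeasureTheory
open scoped Real Topology

noncomputable def conjMonomial (a₁ a₂ : ℤ) (w : ℂ) : ℂ := w ^ (-a₁) * conj w ^ (-a₂)

lemma conjMonomial_add_left {m : ℕ} {w : ℂ} (hw : w ≠ 0) (a₁ a₂ : ℤ) :
    conjMonomial (a₁ + m) a₂ w = conjMonomial a₁ a₂ w / w ^ m := by
  rw [conjMonomial, conjMonomial, neg_add, zpow_add₀ hw, zpow_neg w (m : ℤ), zpow_natCast]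
  ring

lemma conjMonomial_add_right {m : ℕ} {w : ℂ} (hw : w ≠ 0) (a₁ a₂ : ℤ) :
    conjMonomial a₁ (a₂ + m) w = conjMonomial a₁ a₂ w / conj (w ^ m) := by
  rw [conjMonomial, conjMonomial, neg_add, zpow_add₀ ((map_ne_zero _).2 hw),
    zpow_neg (conj w) (m : ℤ), zpow_natCast, map_pow]
  ring

lemma HasDerivAt.conjMonomial_comp {g : ℝ → ℂ} {g' : ℂ} {v : ℝ} (hg : HasDerivAt g g' v)
    (h0 : g v ≠ 0) (a₁ a₂ : ℤ) :
    HasDerivAt (fun v ↦ conjMonomial a₁ a₂ (g v))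
      (conjMonomial a₁ a₂ (g v) * (-a₁ * (g' / g v) - a₂ * conj (g' / g v))) v := by
  have h0' : conj (g v) ≠ 0 := (map_ne_zero _).2 h0
  have hg_conj : HasDerivAt (fun v ↦ conj (g v)) (conj g') v := hg.star
  have h₁ : HasDerivAt (fun v ↦ g v ^ (-a₁)) ((-a₁ : ℤ) * g v ^ (-a₁ - 1) * g') v :=
    (hasDerivAt_zpow (-a₁) (g v) (Or.inl h0)).comp v hg
  have h₂ : HasDerivAt (fun v ↦ conj (g v) ^ (-a₂))
      ((-a₂ : ℤ) * conj (g v) ^ (-a₂ - 1) * conj g') v :=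
    HasDerivAt.comp (h₂ := fun w : ℂ ↦ w ^ (-a₂)) v
      (hasDerivAt_zpow (-a₂) (conj (g v)) (Or.inl h0')) hg_conj
  refine (h₁.mul h₂).congr_deriv ?_
  simp only [conjMonomial, map_div₀, zpow_sub_one₀ h0, zpow_sub_one₀ h0']
  push_cast
  field_simp
  ring

lemma rootBranch_eq_exp_mul_cpow {m : ℕ} {z w : ℂ} {φ : ℝ} (hw : w ≠ 0) (hnorm : ‖z‖ = ‖w‖)
    (harg : argTwoPi z = w.arg + φ) :
    rootBranch m z = exp (φ * I / m) * w ^ (m⁻¹ : ℂ) := by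
  rw [rootBranch, harg, hnorm, Real.rpow_def_of_pos (norm_pos_iff.2 hw), cpow_def_of_ne_zero hw,
    ofReal_exp, ← exp_add, ← exp_add, Complex.log]
  congr 1
  push_cast
  ring

lemma argTwoPi_of_im_pos {z : ℂ} (hz : 0 < z.im) : argTwoPi z = z.arg := by
  rw [argTwoPi, if_pos (arg_nonneg_iff.2 hz.le)]

lemma argTwoPi_of_im_neg {z : ℂ} (hz : z.im < 0) : argTwoPi z = z.arg + 2 * π := by
  rw [argTwoPi, if_neg (not_le.2 (arg_neg_iff.2 hz))]

lemma argTwoPi_eq_arg_neg_add_pi {z : ℂ} (hz : z.im ≠ 0) : argTwoPi z = (-z).arg + π := by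
  rcases hz.lt_or_gt with hz | hz
  · rw [argTwoPi_of_im_neg hz, arg_neg_eq_arg_add_pi_of_im_neg hz]; ring
  · rw [argTwoPi_of_im_pos hz, arg_neg_eq_arg_sub_pi_of_im_pos hz]; ring

-- `G_l` is continuous across the negative real axis, so one formula covers both half-planes.
lemma Gl_eq_of_im_ne_zero {m : ℕ} (l : ℕ) {z : ℂ} (hz : z.im ≠ 0) :
    Gl m l z = exp (2 * π * I / m) ^ l * (exp (π * I / m) * (-z) ^ (m⁻¹ : ℂ)) := by
  have hz0 : -z ≠ 0 := neg_ne_zero.2 fun h ↦ hz (by simp [h])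
  rw [Gl, rootBranch_eq_exp_mul_cpow hz0 (norm_neg z).symm (argTwoPi_eq_arg_neg_add_pi hz)]

lemma Gl_eq_of_im_pos {m : ℕ} (l : ℕ) {z : ℂ} (hz : 0 < z.im) :
    Gl m l z = exp (2 * π * I / m) ^ l * z ^ (m⁻¹ : ℂ) := by
  have hz0 : z ≠ 0 := fun h ↦ by simp [h] at hz
  rw [Gl, rootBranch_eq_exp_mul_cpow (φ := 0) hz0 rfl (by rw [argTwoPi_of_im_pos hz, add_zero])]
  simp

lemma Gl_eq_of_im_neg {m : ℕ} (l : ℕ) {z : ℂ} (hz : z.im < 0) :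
    Gl m l z = exp (2 * π * I / m) ^ (l + 1) * z ^ (m⁻¹ : ℂ) := by
  have hz0 : z ≠ 0 := fun h ↦ by simp [h] at hz
  rw [Gl, rootBranch_eq_exp_mul_cpow hz0 rfl (argTwoPi_of_im_neg hz), pow_succ]
  push_cast
  ring_nf

lemma Gl_neg_one_add_I_mul {m : ℕ} (l : ℕ) {s : ℝ} (hs : s ≠ 0) :
    Gl m l (-1 + I * s) = exp (2 * π * I / m) ^ l * exp (π * I / m) * (1 + -I * s) ^ (m⁻¹ : ℂ) := by
  rw [Gl_eq_of_im_ne_zero l (by simpa using hs), neg_add, neg_neg, neg_mul]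
  ring

lemma Gl_pow {m : ℕ} (hm : m ≠ 0) (l : ℕ) {z : ℂ} (hz : z.im ≠ 0) : Gl m l z ^ m = z := by
  have hmC : (m : ℂ) ≠ 0 := Nat.cast_ne_zero.2 hm
  have hθ : exp (2 * π * I / m) ^ m = 1 := by
    rw [← exp_nat_mul, mul_div_cancel₀ _ hmC, exp_two_pi_mul_I]
  have hζ : exp (π * I / m) ^ m = -1 := by
    rw [← exp_nat_mul, mul_div_cancel₀ _ hmC, exp_pi_mul_I]
  rw [Gl_eq_of_im_ne_zero l hz, mul_pow, mul_pow, ← pow_mul, mul_comm l, pow_mul, hθ, hζ,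
    cpow_nat_inv_pow _ hm]
  simp

lemma hasDerivAt_Gl {m : ℕ} (hm : m ≠ 0) (l : ℕ) {z : ℂ} (hz : z.im ≠ 0) :
    HasDerivAt (Gl m l) (Gl m l z / (m * z)) z := by
  have hz0 : -z ≠ 0 := neg_ne_zero.2 fun h ↦ hz (by simp [h])
  have hslit : -z ∈ slitPlane := Or.inr (by simpa using hz)
  have heq : (fun z ↦ exp (2 * π * I / m) ^ l * (exp (π * I / m) * (-z) ^ (m⁻¹ : ℂ)))
      =ᶠ[𝓝 z] Gl m l := by
    filter_upwards [(continuous_im.isOpen_preimage _ isOpen_ne).mem_nhds hz] with w hw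
    exact (Gl_eq_of_im_ne_zero l hw).symm
  refine ((((hasDerivAt_neg z).cpow_const hslit).const_mul _).const_mul _).congr_of_eventuallyEq
    heq.symm |>.congr_deriv ?_
  rw [Gl_eq_of_im_ne_zero l hz, cpow_sub _ _ hz0, cpow_one]
  field_simp

lemma hasDerivAt_conjMonomial_Gl_line {m : ℕ} (hm : m ≠ 0) (l : ℕ) (a₁ a₂ : ℤ) {s : ℝ}
    (hs : s ≠ 0) (v : ℝ) :
    HasDerivAt (fun v : ℝ ↦ conjMonomial a₁ a₂ (Gl m l (v + I * s)))
      (-(a₁ * conjMonomial (a₁ + m) a₂ (Gl m l (v + I * s))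
        + a₂ * conjMonomial a₁ (a₂ + m) (Gl m l (v + I * s))) / m) v := by
  set z : ℂ := v + I * s
  have hz : z.im ≠ 0 := by simpa [z] using hs
  have hz0 : z ≠ 0 := fun h ↦ hz (by simp [h])
  have hG0 : Gl m l z ≠ 0 := fun h ↦ hz0 (by rw [← Gl_pow hm l hz, h, zero_pow hm])
  have hline : HasDerivAt (fun v : ℝ ↦ Gl m l (v + I * s)) (Gl m l z / (m * z)) v :=
    (hasDerivAt_Gl hm l hz).comp_add_const (x := (v : ℂ)) |>.comp_ofReal
  refine (hline.conjMonomial_comp hG0 a₁ a₂).congr_deriv ?_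
  have hz0' : conj z ≠ 0 := (map_ne_zero _).2 hz0
  have hG0' : conj (Gl m l z) ≠ 0 := (map_ne_zero _).2 hG0
  rw [show (v : ℂ) + I * s = z from rfl, conjMonomial_add_left hG0, conjMonomial_add_right hG0,
    Gl_pow hm l hz]
  simp only [map_div₀, map_mul, map_natCast]
  field_simp
  ring

lemma frakG_shift_identity {m : ℕ} (hm : m ≠ 0) (l : ℕ) (a₁ a₂ : ℤ) {s : ℝ} (hs : s ≠ 0) :
    a₁ * frakG m l (a₁ + m) a₂ 1 s + a₂ * frakG m l a₁ (a₂ + m) 1 s =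
      m * (conjMonomial a₁ a₂ (Gl m l (-1 + I * s)) - conjMonomial a₁ a₂ (Gl m l (1 + I * s))) := by
  have hmC : (m : ℂ) ≠ 0 := Nat.cast_ne_zero.2 hm
  have hfrakG (b₁ b₂ : ℤ) :
      frakG m l b₁ b₂ 1 s = ∫ v in (-1 : ℝ)..1, conjMonomial b₁ b₂ (Gl m l (v + I * s)) := rfl
  have hint (b₁ b₂ : ℤ) (c : ℂ) :
      IntervalIntegrable (fun v : ℝ ↦ c * conjMonomial b₁ b₂ (Gl m l (v + I * s))) volume (-1) 1 :=
    (continuous_const.mul (continuous_iff_continuousAt.2 fun v ↦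
      (hasDerivAt_conjMonomial_Gl_line hm l b₁ b₂ hs v).continuousAt)).intervalIntegrable _ _
  have hftc := intervalIntegral.integral_eq_sub_of_hasDerivAt
    (f := fun v : ℝ ↦ -(m : ℂ) * conjMonomial a₁ a₂ (Gl m l (v + I * s)))
    (f' := fun v : ℝ ↦ a₁ * conjMonomial (a₁ + m) a₂ (Gl m l (v + I * s))
      + a₂ * conjMonomial a₁ (a₂ + m) (Gl m l (v + I * s))) (a := -1) (b := 1)
    (fun v _ ↦ ((hasDerivAt_conjMonomial_Gl_line hm l a₁ a₂ hs v).const_mul _).congr_deriv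
      (by field_simp)) ((hint _ _ _).add (hint _ _ _))
  rw [hfrakG, hfrakG, ← intervalIntegral.integral_const_mul, ← intervalIntegral.integral_const_mul,
    ← intervalIntegral.integral_add (hint _ _ _) (hint _ _ _), hftc]
  push_cast
  ring

lemma AnalyticAt.conjMonomial_comp {f : ℝ → ℂ} {s : ℝ} (hf : AnalyticAt ℝ f s) (h0 : f s ≠ 0)
    (a₁ a₂ : ℤ) : AnalyticAt ℝ (fun s ↦ conjMonomial a₁ a₂ (f s)) s :=
  (hf.zpow h0).mul <| AnalyticAt.zpow (f := fun s ↦ conj (f s))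
    ((conjCLE.toContinuousLinearMap.analyticAt _).comp hf) ((map_ne_zero _).2 h0)

lemma AnalyticAt.comp_ofReal {f : ℂ → ℂ} {x : ℝ} (hf : AnalyticAt ℂ f x) :
    AnalyticAt ℝ (fun y : ℝ ↦ f y) x :=
  hf.restrictScalars.comp (ofRealCLM.analyticAt x)

lemma analyticAt_conjMonomial_mul_cpow {w : ℂ → ℂ} {s : ℝ} (hw : AnalyticAt ℂ w s)
    (hslit : w s ∈ slitPlane) {c : ℂ} (hc : c ≠ 0) (t : ℂ) (a₁ a₂ : ℤ) :
    AnalyticAt ℝ (fun s : ℝ ↦ conjMonomial a₁ a₂ (c * w s ^ t)) s :=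
  (analyticAt_const.mul (hw.cpow analyticAt_const hslit).comp_ofReal).conjMonomial_comp
    (mul_ne_zero hc (cpow_ne_zero_iff.2 (Or.inl (slitPlane_ne_zero hslit)))) a₁ a₂

theorem stmt15_general (m : ℕ) (hm : 2 ≤ m) (l : ℕ) (a₁ a₂ : ℤ) :
    (∀ s : ℝ, s ∈ Set.Icc (-1:ℝ) 1 → s ≠ 0 →
      (a₁ : ℂ) * frakG m l (a₁ + m) a₂ 1 s + (a₂ : ℂ) * frakG m l a₁ (a₂ + m) 1 s =
        (m : ℂ) *
          (Gl m l (-1 + Complex.I * (s : ℂ)) ^ (-a₁) *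
              (starRingEnd ℂ) (Gl m l (-1 + Complex.I * (s : ℂ))) ^ (-a₂) -
            Gl m l (1 + Complex.I * (s : ℂ)) ^ (-a₁) *
              (starRingEnd ℂ) (Gl m l (1 + Complex.I * (s : ℂ))) ^ (-a₂))) ∧
    (∃ g : ℝ → ℂ, AnalyticOn ℝ g (Set.Icc (0:ℝ) 1) ∧ ∀ s ∈ Set.Ioc (0:ℝ) 1,
      g s = (a₁ : ℂ) * frakG m l (a₁ + m) a₂ 1 s + (a₂ : ℂ) * frakG m l a₁ (a₂ + m) 1 s) ∧
    (∃ g : ℝ → ℂ, AnalyticOn ℝ g (Set.Icc (-1:ℝ) 0) ∧ ∀ s ∈ Set.Ico (-1:ℝ) 0,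
      g s = (a₁ : ℂ) * frakG m l (a₁ + m) a₂ 1 s + (a₂ : ℂ) * frakG m l a₁ (a₂ + m) 1 s) := by
  have hm0 : m ≠ 0 := by omega
  have hθ (k : ℕ) : exp (2 * π * I / m) ^ k ≠ 0 := pow_ne_zero _ (exp_ne_zero _)
  have hcpow (b c : ℂ) (hb : b.re = 0) (hc : c ≠ 0) (s : ℝ) :
      AnalyticAt ℝ (fun s : ℝ ↦ conjMonomial a₁ a₂ (c * (1 + b * s) ^ (m⁻¹ : ℂ))) s :=
    analyticAt_conjMonomial_mul_cpow (w := fun z ↦ 1 + b * z) (by fun_prop)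
      (Or.inl (by simp [hb])) hc _ a₁ a₂
  have hboundary (c : ℂ) (hc : c ≠ 0) (s : ℝ) :
      AnalyticAt ℝ (fun s : ℝ ↦ (m : ℂ) *
        (conjMonomial a₁ a₂
            (exp (2 * π * I / m) ^ l * exp (π * I / m) * (1 + -I * s) ^ (m⁻¹ : ℂ))
          - conjMonomial a₁ a₂ (c * (1 + I * s) ^ (m⁻¹ : ℂ)))) s :=
    analyticAt_const.mul ((hcpow _ _ (by simp) (mul_ne_zero (hθ l) (exp_ne_zero _)) s).sub
      (hcpow _ _ (by simp) hc s))
  refine ⟨fun s _ hs ↦ frakG_shift_identity hm0 l a₁ a₂ hs,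
    ⟨_, fun s _ ↦ (hboundary _ (hθ l) s).analyticWithinAt, fun s hs ↦ ?_⟩,
    ⟨_, fun s _ ↦ (hboundary _ (hθ (l + 1)) s).analyticWithinAt, fun s hs ↦ ?_⟩⟩
  · rw [frakG_shift_identity hm0 l a₁ a₂ hs.1.ne', Gl_neg_one_add_I_mul l hs.1.ne',
      Gl_eq_of_im_pos l (by simpa using hs.1)]
  · rw [frakG_shift_identity hm0 l a₁ a₂ hs.2.ne, Gl_neg_one_add_I_mul l hs.2.ne,
      Gl_eq_of_im_neg l (by simpa using hs.2)]

theorem stmt15 (m : ℕ) (hm : 2 ≤ m) (l : ℕ) (hl : l < m) (a₁ a₂ : ℤ) :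
    (∀ s : ℝ, s ∈ Set.Icc (-1:ℝ) 1 → s ≠ 0 →
      (a₁ : ℂ) * frakG m l (a₁ + m) a₂ 1 s + (a₂ : ℂ) * frakG m l a₁ (a₂ + m) 1 s =
        (m : ℂ) *
          (Gl m l (-1 + Complex.I * (s : ℂ)) ^ (-a₁) *
              (starRingEnd ℂ) (Gl m l (-1 + Complex.I * (s : ℂ))) ^ (-a₂) -
            Gl m l (1 + Complex.I * (s : ℂ)) ^ (-a₁) *
              (starRingEnd ℂ) (Gl m l (1 + Complex.I * (s : ℂ))) ^ (-a₂))) ∧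
    (∃ g : ℝ → ℂ, AnalyticOn ℝ g (Set.Icc (0:ℝ) 1) ∧ ∀ s ∈ Set.Ioc (0:ℝ) 1,
      g s = (a₁ : ℂ) * frakG m l (a₁ + m) a₂ 1 s + (a₂ : ℂ) * frakG m l a₁ (a₂ + m) 1 s) ∧
    (∃ g : ℝ → ℂ, AnalyticOn ℝ g (Set.Icc (-1:ℝ) 0) ∧ ∀ s ∈ Set.Ico (-1:ℝ) 0,
      g s = (a₁ : ℂ) * frakG m l (a₁ + m) a₂ 1 s + (a₂ : ℂ) * frakG m l a₁ (a₂ + m) 1 s) :=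
  stmt15_general m hm l a₁ a₂
end
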